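/- For any v ∈ (0, 1/2] and any x ≥ 0, √(1−v)·φ⁺(x) ≤ (φ_v * φ⁺_{1−v})(x) ≤ √(1−v)·φ⁺(x) + √v·e^{−x²/(2v)}, where φ_v is the centered Gaussian density of variance v, φ⁺_w(x) = (x/w) e^{−x²/(2w)} 1_{x≥0} is the Rayleigh density with parameter √w, and φ⁺ = φ⁺_1. -/

import Mathlib

open MeasureTheory

/-- Centered Gaussian density of variance `v`. -/
noncomputable def gaussDens (v x : ℝ) : ℝ :=
  (Real.sqrt (2 * Real.pi * v))⁻¹ * Real.exp (-(x ^ 2) / (2 * v))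

/-- Rayleigh density with scale parameter `√w`: `φ⁺_w(x) = (x/w) e^{-x²/(2w)} 1_{x ≥ 0}`. -/
noncomputable def rayleighDens (w x : ℝ) : ℝ :=
  if 0 ≤ x then (x / w) * Real.exp (-(x ^ 2) / (2 * w)) else 0

/-!
For `s ≥ 0` the integrand `φ_v(x - s) φ⁺_{1-v}(s)` is, after completing the square in the
exponent, a constant multiple of `s e^{-b (s - μ)²}` with `b = 1/(2v(1-v))` and `μ = (1-v) x`.
So everything reduces to the first moment of a shifted Gaussian over the half-line `s > 0`.
It is at least the full-line moment `μ √(π/b)`, since `s ≤ 0` on the discarded half-line; and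
writing `s = (s - μ) + μ` it is at most `μ √(π/b) + e^{-bμ²}/(2b)`, the second term being an
explicit antiderivative computation. Translating the constants back, `e^{-bμ²}/(2b)` becomes
`√v / √(2π) · e^{-x²/(2v)} ≤ √v e^{-x²/(2v)}`.
-/

open Real Set Filter Topology

section ShiftedGaussian

variable {b : ℝ} (hb : 0 < b) (μ : ℝ)

lemma integral_exp_neg_mul_sub_sq :
    ∫ s : ℝ, exp (-b * (s - μ) ^ 2) = √(π / b) := by
  rw [integral_sub_right_eq_self (fun t : ℝ => exp (-b * t ^ 2)) μ, integral_gaussian]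

lemma integral_mul_exp_neg_mul_sq_eq_zero :
    ∫ t : ℝ, t * exp (-b * t ^ 2) = 0 := by
  have hodd := integral_neg_eq_self (fun t : ℝ => t * exp (-b * t ^ 2)) volume
  simp only [neg_sq, neg_mul, integral_neg] at hodd ⊢
  linarith

include hb

lemma integrable_exp_neg_mul_sub_sq :
    Integrable fun s : ℝ => exp (-b * (s - μ) ^ 2) :=
  (integrable_exp_neg_mul_sq hb).comp_sub_right μ

lemma integrable_sub_mul_exp_neg_mul_sub_sq :
    Integrable fun s : ℝ => (s - μ) * exp (-b * (s - μ) ^ 2) :=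
  (integrable_mul_exp_neg_mul_sq hb).comp_sub_right μ

lemma integrable_mul_exp_neg_mul_sub_sq :
    Integrable fun s : ℝ => s * exp (-b * (s - μ) ^ 2) := by
  refine ((integrable_sub_mul_exp_neg_mul_sub_sq hb μ).add
    ((integrable_exp_neg_mul_sub_sq hb μ).const_mul μ)).congr (Eventually.of_forall fun s => ?_)
  simp only [Pi.add_apply]
  ring

lemma integral_mul_exp_neg_mul_sub_sq :
    ∫ s : ℝ, s * exp (-b * (s - μ) ^ 2) = μ * √(π / b) := by
  have hsplit : (fun s : ℝ => s * exp (-b * (s - μ) ^ 2)) =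
      fun s => (s - μ) * exp (-b * (s - μ) ^ 2) + μ * exp (-b * (s - μ) ^ 2) :=
    funext fun s => by ring
  rw [hsplit, integral_add (integrable_sub_mul_exp_neg_mul_sub_sq hb μ)
      ((integrable_exp_neg_mul_sub_sq hb μ).const_mul μ), integral_const_mul,
    integral_exp_neg_mul_sub_sq,
    integral_sub_right_eq_self (fun t : ℝ => t * exp (-b * t ^ 2)) μ,
    integral_mul_exp_neg_mul_sq_eq_zero, zero_add]

lemma integral_Ioi_sub_mul_exp_neg_mul_sub_sq :
    ∫ s in Ioi (0 : ℝ), (s - μ) * exp (-b * (s - μ) ^ 2) = exp (-b * μ ^ 2) / (2 * b) := by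
  have hderiv (s : ℝ) : HasDerivAt (fun s => -exp (-b * (s - μ) ^ 2) / (2 * b))
      ((s - μ) * exp (-b * (s - μ) ^ 2)) s := by
    have hexponent : HasDerivAt (fun s => -b * (s - μ) ^ 2) (-b * (2 * (s - μ))) s := by
      simpa using (((hasDerivAt_id s).sub_const μ).pow 2).const_mul (-b)
    refine (hexponent.exp.neg.div_const (2 * b)).congr_deriv ?_
    field_simp
  have hlim : Tendsto (fun s => -exp (-b * (s - μ) ^ 2) / (2 * b)) atTop (𝓝 0) := by
    have hsq : Tendsto (fun s : ℝ => -b * (s - μ) ^ 2) atTop atBot :=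
      ((tendsto_pow_atTop two_ne_zero).comp (tendsto_atTop_add_const_right _ (-μ) tendsto_id)
        |>.const_mul_atTop_of_neg (neg_lt_zero.2 hb)).congr fun s => by simp [sub_eq_add_neg]
    simpa using ((tendsto_exp_atBot.comp hsq).neg.div_const (2 * b))
  rw [integral_Ioi_of_hasDerivAt_of_tendsto' (fun s _ => hderiv s)
    (integrable_sub_mul_exp_neg_mul_sub_sq hb μ).integrableOn hlim]
  simp [neg_div]

lemma le_integral_Ioi_mul_exp_neg_mul_sub_sq :
    μ * √(π / b) ≤ ∫ s in Ioi (0 : ℝ), s * exp (-b * (s - μ) ^ 2) := by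
  have hint := integrable_mul_exp_neg_mul_sub_sq hb μ
  have hneg : ∫ s in Iic (0 : ℝ), s * exp (-b * (s - μ) ^ 2) ≤ 0 :=
    setIntegral_nonpos measurableSet_Iic fun s hs =>
      mul_nonpos_of_nonpos_of_nonneg hs (exp_pos _).le
  rw [← integral_mul_exp_neg_mul_sub_sq hb μ,
    ← intervalIntegral.integral_Iic_add_Ioi hint.integrableOn hint.integrableOn]
  linarith

lemma integral_Ioi_mul_exp_neg_mul_sub_sq_le (hμ : 0 ≤ μ) :
    ∫ s in Ioi (0 : ℝ), s * exp (-b * (s - μ) ^ 2) ≤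
      μ * √(π / b) + exp (-b * μ ^ 2) / (2 * b) := by
  have hsplit : (fun s : ℝ => s * exp (-b * (s - μ) ^ 2)) =
      fun s => (s - μ) * exp (-b * (s - μ) ^ 2) + μ * exp (-b * (s - μ) ^ 2) :=
    funext fun s => by ring
  have hhalf : ∫ s in Ioi (0 : ℝ), exp (-b * (s - μ) ^ 2) ≤ √(π / b) :=
    integral_exp_neg_mul_sub_sq μ ▸ setIntegral_le_integral
      (integrable_exp_neg_mul_sub_sq hb μ) (Eventually.of_forall fun _ => (exp_pos _).le)
  rw [hsplit, integral_add (integrable_sub_mul_exp_neg_mul_sub_sq hb μ).integrableOn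
      ((integrable_exp_neg_mul_sub_sq hb μ).const_mul μ).integrableOn, integral_const_mul,
    integral_Ioi_sub_mul_exp_neg_mul_sub_sq hb]
  nlinarith

end ShiftedGaussian

section CompletingTheSquare

variable {v : ℝ} (hv : 0 < v) (hw : 0 < 1 - v) (x : ℝ)
include hv hw

lemma gaussDens_sub_mul_rayleighDens {s : ℝ} (hs : 0 ≤ s) :
    gaussDens v (x - s) * rayleighDens (1 - v) s =
      (√(2 * π * v))⁻¹ / (1 - v) * exp (-(x ^ 2) / 2) *
        (s * exp (-(2 * v * (1 - v))⁻¹ * (s - (1 - v) * x) ^ 2)) := by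
  have hexponent : -((x - s) ^ 2) / (2 * v) + -(s ^ 2) / (2 * (1 - v)) =
      -(x ^ 2) / 2 + -(2 * v * (1 - v))⁻¹ * (s - (1 - v) * x) ^ 2 := by
    field_simp
    ring
  rw [gaussDens, rayleighDens, if_pos hs]
  calc _ = (√(2 * π * v))⁻¹ * (s / (1 - v)) *
        exp (-((x - s) ^ 2) / (2 * v) + -(s ^ 2) / (2 * (1 - v))) := by rw [exp_add]; ring
    _ = _ := by rw [hexponent, exp_add]; ring

lemma integral_gaussDens_sub_mul_rayleighDens :
    ∫ s, gaussDens v (x - s) * rayleighDens (1 - v) s =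
      (√(2 * π * v))⁻¹ / (1 - v) * exp (-(x ^ 2) / 2) *
        ∫ s in Ioi (0 : ℝ), s * exp (-(2 * v * (1 - v))⁻¹ * (s - (1 - v) * x) ^ 2) := by
  have hindicator : (fun s => gaussDens v (x - s) * rayleighDens (1 - v) s) =
      (Ici 0).indicator fun s => (√(2 * π * v))⁻¹ / (1 - v) * exp (-(x ^ 2) / 2) *
        (s * exp (-(2 * v * (1 - v))⁻¹ * (s - (1 - v) * x) ^ 2)) := by
    funext s
    by_cases hs : 0 ≤ s
    · rw [indicator_of_mem (mem_Ici.2 hs), gaussDens_sub_mul_rayleighDens hv hw x hs]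
    · rw [indicator_of_notMem (notMem_Ici.2 (not_le.1 hs)), rayleighDens, if_neg hs, mul_zero]
  rw [hindicator, integral_indicator measurableSet_Ici, integral_Ici_eq_integral_Ioi,
    integral_const_mul]

lemma sqrt_one_sub_mul_rayleighDens_one_eq (hx : 0 ≤ x) :
    √(1 - v) * rayleighDens 1 x =
      (√(2 * π * v))⁻¹ / (1 - v) * exp (-(x ^ 2) / 2) *
        ((1 - v) * x * √(π / (2 * v * (1 - v))⁻¹)) := by
  have hsqrt : √(π / (2 * v * (1 - v))⁻¹) = √(2 * π * v) * √(1 - v) := by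
    rw [← sqrt_mul (by positivity), div_inv_eq_mul]
    ring_nf
  have hpos : 0 < √(2 * π * v) := by positivity
  rw [hsqrt, rayleighDens, if_pos hx]
  field_simp

lemma prefactor_mul_gaussian_tail_le :
    (√(2 * π * v))⁻¹ / (1 - v) * exp (-(x ^ 2) / 2) *
        (exp (-(2 * v * (1 - v))⁻¹ * ((1 - v) * x) ^ 2) / (2 * (2 * v * (1 - v))⁻¹)) ≤
      √v * exp (-(x ^ 2) / (2 * v)) := by
  have hexp : exp (-(x ^ 2) / 2) * exp (-(2 * v * (1 - v))⁻¹ * ((1 - v) * x) ^ 2) =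
      exp (-(x ^ 2) / (2 * v)) := by
    rw [← exp_add]
    congr 1
    field_simp
    ring
  have hsqrt : √(2 * π * v) = √(2 * π) * √v := sqrt_mul (by positivity) v
  have hsqrt_v : 0 < √v := sqrt_pos.2 hv
  have hsqrt_2π : 1 ≤ √(2 * π) := one_le_sqrt.2 (by nlinarith [pi_gt_three])
  calc _ = √v / √(2 * π) * exp (-(x ^ 2) / (2 * v)) := by
        rw [← hexp, hsqrt]
        field_simp
        rw [sq_sqrt hv.le]
    _ ≤ √v * exp (-(x ^ 2) / (2 * v)) := by
        gcongr
        exact div_le_self hsqrt_v.le hsqrt_2π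

end CompletingTheSquare

/-- For `v ∈ (0, 1/2]` and `x ≥ 0`,
`√(1-v) φ⁺(x) ≤ (φ_v * φ⁺_{1-v})(x) ≤ √(1-v) φ⁺(x) + √v e^{-x²/(2v)}`. -/
theorem statement10 (v : ℝ) (hv : 0 < v) (hv2 : v ≤ 1 / 2) (x : ℝ) (hx : 0 ≤ x) :
    Real.sqrt (1 - v) * rayleighDens 1 x ≤
        (∫ s : ℝ, gaussDens v (x - s) * rayleighDens (1 - v) s) ∧
      (∫ s : ℝ, gaussDens v (x - s) * rayleighDens (1 - v) s) ≤
        Real.sqrt (1 - v) * rayleighDens 1 x + Real.sqrt v * Real.exp (-(x ^ 2) / (2 * v)) := by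
  have hw : 0 < 1 - v := by linarith
  set b := (2 * v * (1 - v))⁻¹
  set μ := (1 - v) * x
  set C := (√(2 * π * v))⁻¹ / (1 - v) * exp (-(x ^ 2) / 2)
  have hb : 0 < b := by positivity
  have hC : 0 ≤ C := by positivity
  have hmean : C * (μ * √(π / b)) = √(1 - v) * rayleighDens 1 x :=
    (sqrt_one_sub_mul_rayleighDens_one_eq hv hw x hx).symm
  have htail : C * (exp (-b * μ ^ 2) / (2 * b)) ≤ √v * exp (-(x ^ 2) / (2 * v)) :=
    prefactor_mul_gaussian_tail_le hv hw x
  rw [integral_gaussDens_sub_mul_rayleighDens hv hw]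
  refine ⟨hmean ▸ mul_le_mul_of_nonneg_left (le_integral_Ioi_mul_exp_neg_mul_sub_sq hb μ) hC, ?_⟩
  calc _ ≤ C * (μ * √(π / b) + exp (-b * μ ^ 2) / (2 * b)) :=
        mul_le_mul_of_nonneg_left
          (integral_Ioi_mul_exp_neg_mul_sub_sq_le hb μ (by positivity)) hC
    _ ≤ _ := by rw [mul_add, hmean]; gcongr
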